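/- arXiv:2510.20883 — 4 statements merged into one kernel-verified Lean document; each statement's English description precedes it below -/
import Mathlib

section
/- Let H be a real Hilbert space, φ(x) ∈ H a fixed vector, f ∈ H, y ∈ ℝ, and δ ≥ 0. Then the supremum over d ∈ H with ‖d‖_H ≤ δ of (y − ⟨f, φ(x) + d⟩_H)² equals (|y − ⟨f, φ(x)⟩_H| + δ‖f‖_H)². -/
/-!
As `d` ranges over the `δ`-ball, `⟪f, d⟫` ranges exactly over `[-δ‖f‖, δ‖f‖]` (Cauchy–Schwarz,
with equality along `f`), so the loss is `(a - t)²` with `a = y - ⟪f, φ x⟫` and `t` in that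
interval, which is largest at the endpoint on the far side of `a`.
-/

open Set Metric

theorem isGreatest_sq_sub_image_Icc {a r : ℝ} (hr : 0 ≤ r) :
    IsGreatest ((fun t => (a - t) ^ 2) '' Icc (-r) r) ((|a| + r) ^ 2) := by
  refine ⟨?_, ?_⟩
  · rcases le_or_gt 0 a with ha | ha
    · refine ⟨-r, ⟨le_rfl, by linarith⟩, ?_⟩
      simp only [abs_of_nonneg ha, sub_neg_eq_add]
    · refine ⟨r, ⟨by linarith, le_rfl⟩, ?_⟩
      simp only [abs_of_neg ha]
      ring
  · rintro _ ⟨t, ⟨hlo, hhi⟩, rfl⟩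
    have hdist : |a - t| ≤ |a| + r :=
      (abs_sub _ _).trans (add_le_add_right (abs_le.mpr ⟨hlo, hhi⟩) _)
    simpa only [sq_abs] using pow_le_pow_left₀ (abs_nonneg _) hdist 2

theorem image_inner_closedBall {H : Type*} [NormedAddCommGroup H] [InnerProductSpace ℝ H]
    (f : H) {δ : ℝ} (hδ : 0 ≤ δ) :
    (fun d => (inner ℝ f d : ℝ)) '' closedBall 0 δ = Icc (-(δ * ‖f‖)) (δ * ‖f‖) := by
  ext t
  constructor
  · rintro ⟨d, hd, rfl⟩
    rw [mem_closedBall_zero_iff] at hd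
    rw [mem_Icc, ← abs_le]
    calc |(inner ℝ f d : ℝ)| ≤ ‖f‖ * ‖d‖ := abs_real_inner_le_norm f d
      _ ≤ δ * ‖f‖ := by rw [mul_comm]; gcongr
  · intro ht
    have htf : |t| ≤ δ * ‖f‖ := abs_le.mpr ht
    rcases eq_or_ne f 0 with rfl | hf
    · have ht0 : t = 0 := by simpa using htf
      exact ⟨0, mem_closedBall_self hδ, by simp [ht0]⟩
    have hfn : 0 < ‖f‖ := norm_pos_iff.mpr hf
    refine ⟨(t / ‖f‖ ^ 2) • f, ?_, ?_⟩
    · rw [mem_closedBall_zero_iff, norm_smul, Real.norm_eq_abs, abs_div, abs_sq]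
      calc |t| / ‖f‖ ^ 2 * ‖f‖ = |t| / ‖f‖ := by field_simp
        _ ≤ δ := (div_le_iff₀ hfn).mpr htf
    · simp only [real_inner_smul_right, real_inner_self_eq_norm_sq]
      field_simp

/-- Closed formula for the inner maximization: the supremum of the feature-perturbed
squared loss over perturbations of RKHS norm at most `δ` equals
`(|y - ⟨f, φ x⟩| + δ‖f‖)²`. -/
theorem adversarial_inner_maximization_closed_form
    {H X : Type*} [NormedAddCommGroup H] [InnerProductSpace ℝ H]
    (φ : X → H) (f : H) (y δ : ℝ) (hδ : 0 ≤ δ) (x : X) :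
    sSup ((fun d : H => (y - (inner ℝ f (φ x + d) : ℝ)) ^ 2) '' {d | ‖d‖ ≤ δ}) =
      (|y - (inner ℝ f (φ x) : ℝ)| + δ * ‖f‖) ^ 2 := by
  have hloss : (fun d : H => (y - (inner ℝ f (φ x + d) : ℝ)) ^ 2) =
      (fun t => (y - inner ℝ f (φ x) - t) ^ 2) ∘ fun d => (inner ℝ f d : ℝ) := by
    ext d
    simp only [Function.comp_apply, inner_add_right, sub_add_eq_sub_sub]
  have hball : {d : H | ‖d‖ ≤ δ} = closedBall 0 δ := by
    ext d
    exact mem_closedBall_zero_iff.symm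
  rw [hloss, hball, image_comp, image_inner_closedBall f hδ]
  exact (isGreatest_sq_sub_image_Icc (by positivity)).csSup_eq
end

section
/- (Excess risk for kernel ridge regression.) Let f̂ be a minimizer over H of the kernel ridge regression objective L(f) = (1/n)·Σ_{i=1}^n (y_i − ⟨f, φ(x_i)⟩_H)² + λ‖f‖_H² with regularization parameter λ > 0, and assume ‖f*‖_H > 0. Then the in-sample excess risk satisfies E(f̂ − f*) ≤ min(B_γ, B_β), where B_γ = 2(Rλ + σγ)²/λ and B_β = 2(R²λ + σ²β²). -/
/-!
Write `Δ = fhat - fstar`, `E = empiricalSqNorm` and `S = empiricalInner w`. The ridge objective is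
quadratic with second-order part `E + λ‖·‖²`, so comparing `fhat` with the midpoint of `fhat` and
`fstar` (rather than with `fstar` itself) gives the basic inequality
`(3/2) E(Δ) + λ (‖fhat‖² + ‖Δ‖² / 2) ≤ λ R² + 2 σ S(Δ)`.
Homogeneity gives `S(Δ) ≤ γ ‖Δ‖` and `S(Δ) ≤ β √E(Δ)`, and each bound follows by maximizing a
concave quadratic in `‖Δ‖` (using `‖fhat‖ ≥ |‖Δ‖ - R|`), respectively in `√E(Δ)`.
-/

open Finset

theorem add_half_le_of_midpoint_eq {V : Type*} [AddCommGroup V] [Module ℝ V] {J q : V → ℝ}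
    (hJ : ∀ a b, J (midpoint ℝ a b) = (J a + J b) / 2 - q (a - b) / 4) {m : V}
    (hm : ∀ g, J m ≤ J g) (g : V) : J m + q (m - g) / 2 ≤ J g := by
  linarith [hm (midpoint ℝ m g), hJ m g]

theorem le_mul_of_forall_le_of_smul {V : Type*} [AddCommGroup V] [Module ℝ V] {ℓ N : V → ℝ}
    (hℓ : ∀ (c : ℝ) g, 0 ≤ c → ℓ (c • g) = c * ℓ g)
    (hN : ∀ (c : ℝ) g, 0 ≤ c → N (c • g) = c * N g)
    {s : ℝ} (hs : ∀ g, N g ≤ 1 → ℓ g ≤ s) {g : V} (hg : 0 ≤ N g) : ℓ g ≤ s * N g := by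
  rcases hg.eq_or_lt with hg0 | hgpos
  · -- Every multiple of `g` lies in the unit ball, so `ℓ g > 0` would make `ℓ` unbounded there.
    rw [← hg0, mul_zero]
    by_contra! hpos
    have hc : 0 ≤ (|s| + 1) / ℓ g := by positivity
    have := hs _ (by rw [hN _ _ hc, ← hg0, mul_zero]; exact zero_le_one)
    rw [hℓ _ _ hc, div_mul_cancel₀ _ hpos.ne'] at this
    linarith [le_abs_self s]
  · have hc : 0 ≤ (N g)⁻¹ := inv_nonneg.mpr hgpos.le
    have := hs _ (by rw [hN _ _ hc, inv_mul_cancel₀ hgpos.ne'])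
    rwa [hℓ _ _ hc, inv_mul_le_iff₀ hgpos, mul_comm] at this

section Empirical

variable {H X : Type*} [NormedAddCommGroup H] [InnerProductSpace ℝ H] {n : ℕ}
  (φ : X → H) (x : Fin n → X)

noncomputable def empiricalSqNorm (g : H) : ℝ :=
  (1 / (n : ℝ)) * ∑ i, (inner ℝ g (φ (x i)) : ℝ) ^ 2

noncomputable def empiricalInner (w : Fin n → ℝ) (g : H) : ℝ :=
  (1 / (n : ℝ)) * ∑ i, w i * (inner ℝ g (φ (x i)) : ℝ)

noncomputable def empiricalLoss (y : Fin n → ℝ) (g : H) : ℝ :=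
  (1 / (n : ℝ)) * ∑ i, (y i - (inner ℝ g (φ (x i)) : ℝ)) ^ 2

noncomputable def ridgeObjective (y : Fin n → ℝ) (lam : ℝ) (g : H) : ℝ :=
  empiricalLoss φ x y g + lam * ‖g‖ ^ 2

variable {φ x}

theorem empiricalSqNorm_nonneg (g : H) : 0 ≤ empiricalSqNorm φ x g := by
  unfold empiricalSqNorm
  positivity

theorem empiricalSqNorm_smul (c : ℝ) (g : H) :
    empiricalSqNorm φ x (c • g) = c ^ 2 * empiricalSqNorm φ x g := by
  simp only [empiricalSqNorm, real_inner_smul_left, mul_pow, ← mul_sum]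
  ring

theorem empiricalInner_smul (w : Fin n → ℝ) (c : ℝ) (g : H) :
    empiricalInner φ x w (c • g) = c * empiricalInner φ x w g := by
  simp only [empiricalInner, real_inner_smul_left, mul_left_comm (w _) c, ← mul_sum]
  ring

theorem empiricalInner_eq_inner (w : Fin n → ℝ) (g : H) :
    empiricalInner φ x w g = inner ℝ g ((1 / (n : ℝ)) • ∑ i, w i • φ (x i)) := by
  simp only [empiricalInner, inner_smul_right, inner_sum]

theorem empiricalInner_le_sqrt_mul_sqrt (w : Fin n → ℝ) (g : H) :
    empiricalInner φ x w g ≤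
      √((1 / (n : ℝ)) * ∑ i, w i ^ 2) * √(empiricalSqNorm φ x g) := by
  have hn : 0 ≤ 1 / (n : ℝ) := by positivity
  calc empiricalInner φ x w g
      ≤ √(1 / (n : ℝ)) ^ 2 * (√(∑ i, w i ^ 2) * √(∑ i, (inner ℝ g (φ (x i)) : ℝ) ^ 2)) := by
        rw [Real.sq_sqrt hn]
        exact mul_le_mul_of_nonneg_left (Real.sum_mul_le_sqrt_mul_sqrt _ _ _) hn
    _ = _ := by
        rw [empiricalSqNorm, Real.sqrt_mul hn, Real.sqrt_mul hn]
        ring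

theorem empiricalLoss_eq (fstar : H) (σ : ℝ) (w : Fin n → ℝ) {y : Fin n → ℝ}
    (hy : ∀ i, y i = (inner ℝ fstar (φ (x i)) : ℝ) + σ * w i) (g : H) :
    empiricalLoss φ x y g = empiricalLoss φ x y fstar
      - 2 * σ * empiricalInner φ x w (g - fstar) + empiricalSqNorm φ x (g - fstar) := by
  simp only [empiricalLoss, empiricalInner, empiricalSqNorm, hy, inner_sub_left, mul_sum,
    ← sum_sub_distrib, ← sum_add_distrib]
  exact sum_congr rfl fun i _ => by ring

theorem empiricalLoss_midpoint (y : Fin n → ℝ) (a b : H) :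
    empiricalLoss φ x y (midpoint ℝ a b) =
      (empiricalLoss φ x y a + empiricalLoss φ x y b) / 2 - empiricalSqNorm φ x (a - b) / 4 := by
  simp only [empiricalLoss, empiricalSqNorm, midpoint_eq_smul_add, invOf_eq_inv,
    real_inner_smul_left, inner_add_left, inner_sub_left, mul_sum, sum_div,
    ← sum_sub_distrib, ← sum_add_distrib]
  exact sum_congr rfl fun i _ => by ring

theorem norm_midpoint_sq (a b : H) :
    ‖midpoint ℝ a b‖ ^ 2 = (‖a‖ ^ 2 + ‖b‖ ^ 2) / 2 - ‖a - b‖ ^ 2 / 4 := by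
  rw [midpoint_eq_smul_add, norm_smul, mul_pow, invOf_eq_inv, norm_inv, Real.norm_two]
  linarith [parallelogram_law_with_norm ℝ a b]

theorem ridgeObjective_midpoint (y : Fin n → ℝ) (lam : ℝ) (a b : H) :
    ridgeObjective φ x y lam (midpoint ℝ a b) =
      (ridgeObjective φ x y lam a + ridgeObjective φ x y lam b) / 2
        - (empiricalSqNorm φ x (a - b) + lam * ‖a - b‖ ^ 2) / 4 := by
  simp only [ridgeObjective, empiricalLoss_midpoint, norm_midpoint_sq]
  ring

theorem empiricalInner_le_sSup_mul_norm (w : Fin n → ℝ) (g : H) :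
    empiricalInner φ x w g ≤
      sSup {t : ℝ | ∃ g : H, ‖g‖ ≤ 1 ∧ t = empiricalInner φ x w g} * ‖g‖ := by
  set v : H := (1 / (n : ℝ)) • ∑ i, w i • φ (x i)
  have hbdd : BddAbove {t : ℝ | ∃ g : H, ‖g‖ ≤ 1 ∧ t = empiricalInner φ x w g} := by
    refine ⟨‖v‖, ?_⟩
    rintro _ ⟨g, hg, rfl⟩
    calc empiricalInner φ x w g = inner ℝ g v := empiricalInner_eq_inner w g
      _ ≤ ‖g‖ * ‖v‖ := real_inner_le_norm g v
      _ ≤ ‖v‖ := mul_le_of_le_one_left (norm_nonneg v) hg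
  exact le_mul_of_forall_le_of_smul (fun c g _ => empiricalInner_smul w c g)
    (fun c g hc => by rw [norm_smul, Real.norm_of_nonneg hc])
    (fun g hg => le_csSup hbdd ⟨g, hg, rfl⟩) (norm_nonneg g)

theorem empiricalInner_le_sSup_mul_sqrt {w : Fin n → ℝ}
    (hw : (1 / (n : ℝ)) * ∑ i, w i ^ 2 = 1) (g : H) :
    empiricalInner φ x w g ≤
      sSup {t : ℝ | ∃ g : H, empiricalSqNorm φ x g ≤ 1 ∧ t = empiricalInner φ x w g} *
        √(empiricalSqNorm φ x g) := by
  have hbdd : BddAbove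
      {t : ℝ | ∃ g : H, empiricalSqNorm φ x g ≤ 1 ∧ t = empiricalInner φ x w g} := by
    refine ⟨1, ?_⟩
    rintro _ ⟨g, hg, rfl⟩
    have hCS := empiricalInner_le_sqrt_mul_sqrt (φ := φ) (x := x) w g
    rw [hw, Real.sqrt_one, one_mul] at hCS
    exact hCS.trans (Real.sqrt_le_one.mpr hg)
  exact le_mul_of_forall_le_of_smul (fun c g _ => empiricalInner_smul w c g)
    (fun c g hc => by rw [empiricalSqNorm_smul, Real.sqrt_mul (sq_nonneg c), Real.sqrt_sq hc])
    (fun g hg => le_csSup hbdd ⟨g, Real.sqrt_le_one.mp hg, rfl⟩) (Real.sqrt_nonneg _)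

theorem ridge_basic_inequality {fstar fhat : H} {σ lam : ℝ} {w y : Fin n → ℝ}
    (hy : ∀ i, y i = (inner ℝ fstar (φ (x i)) : ℝ) + σ * w i)
    (hmin : ∀ g, ridgeObjective φ x y lam fhat ≤ ridgeObjective φ x y lam g) :
    3 / 2 * empiricalSqNorm φ x (fhat - fstar) + lam * (‖fhat‖ ^ 2 + ‖fhat - fstar‖ ^ 2 / 2) ≤
      lam * ‖fstar‖ ^ 2 + 2 * σ * empiricalInner φ x w (fhat - fstar) := by
  have hmid := add_half_le_of_midpoint_eq
    (q := fun h => empiricalSqNorm φ x h + lam * ‖h‖ ^ 2) (ridgeObjective_midpoint y lam) hmin fstar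
  have hloss := empiricalLoss_eq fstar σ w hy fhat
  unfold ridgeObjective at hmid
  linarith

end Empirical

theorem kernel_ridge_regression_excess_risk_general
    {H X : Type*} [NormedAddCommGroup H] [InnerProductSpace ℝ H]
    (φ : X → H) (n : ℕ) (x : Fin n → X) (w : Fin n → ℝ)
    (hw : (1 / (n : ℝ)) * ∑ i, (w i) ^ 2 = 1)
    (fstar : H) (σ : ℝ) (hσ : 0 ≤ σ)
    (y : Fin n → ℝ) (hy : ∀ i, y i = (inner ℝ fstar (φ (x i)) : ℝ) + σ * w i)
    (R : ℝ) (hR : R = ‖fstar‖)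
    (lam : ℝ) (hlam : 0 < lam)
    (γ : ℝ)
    (hγ : γ = sSup {t : ℝ | ∃ g : H, ‖g‖ ≤ 1 ∧
      t = (1 / (n : ℝ)) * ∑ i, w i * (inner ℝ g (φ (x i)) : ℝ)})
    (β : ℝ)
    (hβ : β = sSup {t : ℝ | ∃ g : H,
      (1 / (n : ℝ)) * ∑ i, (inner ℝ g (φ (x i)) : ℝ) ^ 2 ≤ 1 ∧
      t = (1 / (n : ℝ)) * ∑ i, w i * (inner ℝ g (φ (x i)) : ℝ)})
    (fhat : H)
    (hmin : ∀ g : H,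
      (1 / (n : ℝ)) * ∑ i, (y i - (inner ℝ fhat (φ (x i)) : ℝ)) ^ 2 + lam * ‖fhat‖ ^ 2 ≤
      (1 / (n : ℝ)) * ∑ i, (y i - (inner ℝ g (φ (x i)) : ℝ)) ^ 2 + lam * ‖g‖ ^ 2) :
    (1 / (n : ℝ)) * ∑ i, (inner ℝ (fhat - fstar) (φ (x i)) : ℝ) ^ 2 ≤
      min (2 * (R * lam + σ * γ) ^ 2 / lam)
        (2 * (R ^ 2 * lam + σ ^ 2 * β ^ 2)) := by
  change empiricalSqNorm φ x (fhat - fstar) ≤ _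
  have basic := ridge_basic_inequality (w := w) hy hmin
  have hSγ : empiricalInner φ x w (fhat - fstar) ≤ γ * ‖fhat - fstar‖ :=
    hγ ▸ empiricalInner_le_sSup_mul_norm w _
  have hSβ : empiricalInner φ x w (fhat - fstar) ≤ β * √(empiricalSqNorm φ x (fhat - fstar)) :=
    hβ ▸ empiricalInner_le_sSup_mul_sqrt hw _
  set e := empiricalSqNorm φ x (fhat - fstar)
  set t := ‖fhat - fstar‖
  subst hR
  refine le_min ?_ ?_
  · have hfhat : (t - ‖fstar‖) ^ 2 ≤ ‖fhat‖ ^ 2 := sq_le_sq'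
      (by linarith [norm_sub_norm_le fstar fhat, norm_sub_rev fstar fhat])
      (by linarith [norm_sub_le fhat fstar])
    have hquad : 3 / 2 * e ≤ 2 * (‖fstar‖ * lam + σ * γ) * t - 3 / 2 * lam * t ^ 2 := by
      nlinarith [mul_le_mul_of_nonneg_left hSγ hσ, mul_le_mul_of_nonneg_left hfhat hlam.le]
    rw [le_div_iff₀ hlam]
    nlinarith [sq_nonneg (3 / 2 * lam * t - (‖fstar‖ * lam + σ * γ)),
      mul_le_mul_of_nonneg_left hquad hlam.le]
  · have he : √e ^ 2 = e := Real.sq_sqrt (empiricalSqNorm_nonneg _)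
    have hquad : 3 / 2 * √e ^ 2 ≤ lam * ‖fstar‖ ^ 2 + 2 * (σ * β) * √e := by
      nlinarith [mul_le_mul_of_nonneg_left hSβ hσ, sq_nonneg t, sq_nonneg ‖fhat‖]
    nlinarith [sq_nonneg (√e - 2 * σ * β), sq_nonneg ‖fstar‖]

/-- Excess risk for kernel ridge regression: if `fhat` minimizes the ridge objective
`(1/n) Σᵢ (yᵢ - ⟨f, φ(xᵢ)⟩)² + λ‖f‖²`, then the in-sample excess risk is bounded by
`min(2(Rλ + σγ)²/λ, 2(R²λ + σ²β²))`. -/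
theorem kernel_ridge_regression_excess_risk
    {H X : Type*} [NormedAddCommGroup H] [InnerProductSpace ℝ H]
    (φ : X → H) (n : ℕ) (hn : 0 < n) (x : Fin n → X) (w : Fin n → ℝ)
    (hw : (1 / (n : ℝ)) * ∑ i, (w i) ^ 2 = 1)
    (fstar : H) (σ : ℝ) (hσ : 0 ≤ σ)
    (y : Fin n → ℝ) (hy : ∀ i, y i = (inner ℝ fstar (φ (x i)) : ℝ) + σ * w i)
    (R : ℝ) (hR : R = ‖fstar‖) (hRpos : 0 < ‖fstar‖)
    (lam : ℝ) (hlam : 0 < lam)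
    (γ : ℝ)
    (hγ : γ = sSup {t : ℝ | ∃ g : H, ‖g‖ ≤ 1 ∧
      t = (1 / (n : ℝ)) * ∑ i, w i * (inner ℝ g (φ (x i)) : ℝ)})
    (β : ℝ)
    (hβ : β = sSup {t : ℝ | ∃ g : H,
      (1 / (n : ℝ)) * ∑ i, (inner ℝ g (φ (x i)) : ℝ) ^ 2 ≤ 1 ∧
      t = (1 / (n : ℝ)) * ∑ i, w i * (inner ℝ g (φ (x i)) : ℝ)})
    (fhat : H)
    (hmin : ∀ g : H,
      (1 / (n : ℝ)) * ∑ i, (y i - (inner ℝ fhat (φ (x i)) : ℝ)) ^ 2 + lam * ‖fhat‖ ^ 2 ≤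
      (1 / (n : ℝ)) * ∑ i, (y i - (inner ℝ g (φ (x i)) : ℝ)) ^ 2 + lam * ‖g‖ ^ 2) :
    (1 / (n : ℝ)) * ∑ i, (inner ℝ (fhat - fstar) (φ (x i)) : ℝ) ^ 2 ≤
      min (2 * (R * lam + σ * γ) ^ 2 / lam)
        (2 * (R ^ 2 * lam + σ ^ 2 * β ^ 2)) :=
  kernel_ridge_regression_excess_risk_general φ n x w hw fstar σ hσ y hy R hR lam hlam γ hγ β hβ
    fhat hmin
end

section
/- (Kernel-distance ball for the polynomial kernel.) Let k(x, x') = (1 + xᵀx')ᵈ on ℝᵖ, with d a positive integer. Let x, x' ∈ ℝᵖ and δ > 0 satisfy δ² < k(x, x) + k(x', x') and k(x, x) + k(x', x') − 2k(x, x') ≤ δ². Then ‖x − x'‖₂ ≤ C·δ^{1/d}, where C = 2^{−1/(2d)}·√(2 + ‖x‖₂² + ‖x'‖₂²). -/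
/-!
Put `m = 1 + (‖x‖² + ‖x'‖²) / 2` and `c = 1 + ⟪x, x'⟫`, so that `‖x - x'‖² = 2 (m - c)` and, by
Cauchy–Schwarz, `2 - m ≤ c ≤ m`. Convexity of `t ↦ tᵈ` bounds the squared kernel distance below
by `2 (mᵈ - cᵈ)`, and on that range of `c` one has `(m - c)ᵈ ≤ mᵈ (mᵈ - cᵈ)`. Hence
`‖x - x'‖^(2d) ≤ (2m)ᵈ δ² / 2`, which is exactly the `2d`-th power of the claimed bound.
-/

open RealInnerProductSpace

section OrderedRing

variable {R : Type*} [CommRing R] [LinearOrder R] [IsStrictOrderedRing R]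

lemma pow_mul_sub_le_pow_succ_sub_pow_succ {m c : R} (hc : 0 ≤ c) (hcm : c ≤ m) (n : ℕ) :
    m ^ n * (m - c) ≤ m ^ (n + 1) - c ^ (n + 1) := by
  rw [← geom_sum₂_mul]
  refine mul_le_mul_of_nonneg_right ?_ (sub_nonneg.2 hcm)
  simpa using Finset.single_le_sum (f := fun i ↦ m ^ i * c ^ (n + 1 - 1 - i))
    (fun i _ ↦ mul_nonneg (pow_nonneg (hc.trans hcm) _) (pow_nonneg hc _))
    (Finset.self_mem_range_succ n)

lemma sub_pow_le_pow_mul_pow_sub_pow {m c : R} (hm : 1 ≤ m) (hlo : 2 - m ≤ c) (hhi : c ≤ m)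
    {d : ℕ} (hd : d ≠ 0) : (m - c) ^ d ≤ m ^ d * (m ^ d - c ^ d) := by
  obtain ⟨n, rfl⟩ := Nat.exists_eq_succ_of_ne_zero hd
  rcases le_or_gt 0 c with hc | hc
  · calc (m - c) ^ (n + 1) = (m - c) ^ n * (m - c) := pow_succ _ _
      _ ≤ m ^ n * (m - c) := by gcongr; linarith
      _ ≤ m ^ (n + 1) - c ^ (n + 1) := pow_mul_sub_le_pow_succ_sub_pow_succ hc hhi n
      _ ≤ m ^ (n + 1) * (m ^ (n + 1) - c ^ (n + 1)) :=
        le_mul_of_one_le_left (sub_nonneg.2 (pow_le_pow_left₀ hc hhi _)) (one_le_pow₀ hm)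
  · have hm2 : 2 ≤ m := by linarith
    have hpow_le : c ^ (n + 1) ≤ (-c) ^ (n + 1) :=
      calc c ^ (n + 1) ≤ |c ^ (n + 1)| := le_abs_self _
        _ = (-c) ^ (n + 1) := by rw [abs_pow, abs_of_neg hc]
    have hgap : 2 * m ^ n ≤ m ^ (n + 1) - c ^ (n + 1) := by
      have := pow_mul_sub_le_pow_succ_sub_pow_succ (neg_nonneg.2 hc.le) (by linarith : -c ≤ m) n
      have : m ^ n * 2 ≤ m ^ n * (m - -c) := by gcongr; linarith
      linarith
    calc (m - c) ^ (n + 1) = (m - c) ^ n * (m - c) := pow_succ _ _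
      _ ≤ (m * m) ^ n * (2 * m) := by gcongr <;> nlinarith
      _ = m ^ (n + 1) * (2 * m ^ n) := by ring
      _ ≤ m ^ (n + 1) * (m ^ (n + 1) - c ^ (n + 1)) := by gcongr

end OrderedRing

lemma two_mul_add_div_two_pow_le {𝕜 : Type*} [Field 𝕜] [LinearOrder 𝕜] [IsStrictOrderedRing 𝕜]
    {a b : 𝕜} (ha : 0 ≤ a) (hb : 0 ≤ b) (n : ℕ) :
    2 * ((a + b) / 2) ^ n ≤ a ^ n + b ^ n := by
  have h := (convexOn_pow n).2 (Set.mem_Ici.2 ha) (Set.mem_Ici.2 hb)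
    (by norm_num : (0 : 𝕜) ≤ 1 / 2) (by norm_num : (0 : 𝕜) ≤ 1 / 2) (by norm_num)
  simp only [smul_eq_mul] at h
  rw [show (a + b) / 2 = 1 / 2 * a + 1 / 2 * b by ring]
  linarith

section InnerProductSpace

variable {E : Type*} [NormedAddCommGroup E] [InnerProductSpace ℝ E]

def polyKernel (d : ℕ) (x y : E) : ℝ := (1 + ⟪x, y⟫) ^ d

theorem norm_sub_pow_two_mul_le_polyKernel {d : ℕ} (hd : d ≠ 0) (x y : E) :
    ‖x - y‖ ^ (2 * d) ≤ (2 + ‖x‖ ^ 2 + ‖y‖ ^ 2) ^ d *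
      ((polyKernel d x x + polyKernel d y y - 2 * polyKernel d x y) / 2) := by
  set m : ℝ := 1 + (‖x‖ ^ 2 + ‖y‖ ^ 2) / 2 with hm_def
  set c : ℝ := 1 + ⟪x, y⟫ with hc_def
  have hdist : ‖x - y‖ ^ 2 = 2 * (m - c) := by rw [norm_sub_sq_real]; ring
  have hhi : c ≤ m := by linarith [sq_nonneg ‖x - y‖]
  have hlo : 2 - m ≤ c := by linarith [norm_add_sq_real x y, sq_nonneg ‖x + y‖]
  have hm : 1 ≤ m := by linarith [sq_nonneg ‖x‖, sq_nonneg ‖y‖]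
  have hconv : 2 * m ^ d ≤ polyKernel d x x + polyKernel d y y := by
    have h := two_mul_add_div_two_pow_le (by positivity : (0 : ℝ) ≤ 1 + ‖x‖ ^ 2)
      (by positivity : (0 : ℝ) ≤ 1 + ‖y‖ ^ 2) d
    rwa [show (1 + ‖x‖ ^ 2 + (1 + ‖y‖ ^ 2)) / 2 = m by ring, ← real_inner_self_eq_norm_sq,
      ← real_inner_self_eq_norm_sq] at h
  have hkxy : polyKernel d x y = c ^ d := rfl
  calc ‖x - y‖ ^ (2 * d) = 2 ^ d * (m - c) ^ d := by rw [pow_mul, hdist, mul_pow]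
    _ ≤ 2 ^ d * (m ^ d * (m ^ d - c ^ d)) := by
      gcongr; exact sub_pow_le_pow_mul_pow_sub_pow hm hlo hhi hd
    _ = (2 * m) ^ d * (m ^ d - c ^ d) := by rw [mul_pow, mul_assoc]
    _ ≤ (2 * m) ^ d * ((polyKernel d x x + polyKernel d y y - 2 * polyKernel d x y) / 2) := by
      gcongr; linarith
    _ = _ := by congr 2; ring

end InnerProductSpace

theorem polynomial_kernel_distance_ball_general (p : ℕ) (d : ℕ) (hd : 0 < d)
    (x x' : EuclideanSpace ℝ (Fin p)) (δ : ℝ) (hδ : 0 < δ)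
    (h2 : (1 + (inner ℝ x x : ℝ)) ^ d + (1 + (inner ℝ x' x' : ℝ)) ^ d
        - 2 * (1 + (inner ℝ x x' : ℝ)) ^ d ≤ δ ^ 2) :
    ‖x - x'‖ ≤ (2 : ℝ) ^ (-(1 : ℝ) / (2 * d)) *
      Real.sqrt (2 + ‖x‖ ^ 2 + ‖x'‖ ^ 2) * δ ^ ((1 : ℝ) / d) := by
  set C : ℝ := 2 + ‖x‖ ^ 2 + ‖x'‖ ^ 2
  have hd0 : d ≠ 0 := hd.ne'
  have hbound_pow : ((2 : ℝ) ^ (-(1 : ℝ) / (2 * d)) * Real.sqrt C * δ ^ ((1 : ℝ) / d)) ^ (2 * d)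
      = C ^ d * (δ ^ 2 / 2) := by
    rw [mul_pow, mul_pow, ← Real.rpow_mul_natCast (by norm_num),
      pow_mul, Real.sq_sqrt (by positivity), mul_comm 2 d, pow_mul, one_div,
      Real.rpow_inv_natCast_pow hδ.le hd0]
    rw [show -(1 : ℝ) / (2 * d) * ((d * 2 : ℕ) : ℝ) = -1 by push_cast; field_simp,
      Real.rpow_neg_one]
    ring
  refine (pow_le_pow_iff_left₀ (norm_nonneg _) (by positivity) (by positivity : 2 * d ≠ 0)).1 ?_
  calc ‖x - x'‖ ^ (2 * d) ≤ C ^ d * ((polyKernel d x x + polyKernel d x' x'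
        - 2 * polyKernel d x x') / 2) := norm_sub_pow_two_mul_le_polyKernel hd0 x x'
    _ ≤ C ^ d * (δ ^ 2 / 2) := by gcongr; exact h2
    _ = _ := hbound_pow.symm

/-- Kernel-distance ball for the polynomial kernel `k(x, x') = (1 + xᵀx')ᵈ`:
if `δ² < k(x,x) + k(x',x')` and the squared kernel distance
`k(x,x) + k(x',x') - 2k(x,x')` is at most `δ²`, then
`‖x - x'‖₂ ≤ 2^(-1/(2d)) √(2 + ‖x‖₂² + ‖x'‖₂²) · δ^(1/d)`. -/
theorem polynomial_kernel_distance_ball (p : ℕ) (d : ℕ) (hd : 0 < d)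
    (x x' : EuclideanSpace ℝ (Fin p)) (δ : ℝ) (hδ : 0 < δ)
    (h1 : δ ^ 2 < (1 + (inner ℝ x x : ℝ)) ^ d + (1 + (inner ℝ x' x' : ℝ)) ^ d)
    (h2 : (1 + (inner ℝ x x : ℝ)) ^ d + (1 + (inner ℝ x' x' : ℝ)) ^ d
        - 2 * (1 + (inner ℝ x x' : ℝ)) ^ d ≤ δ ^ 2) :
    ‖x - x'‖ ≤ (2 : ℝ) ^ (-(1 : ℝ) / (2 * d)) *
      Real.sqrt (2 + ‖x‖ ^ 2 + ‖x'‖ ^ 2) * δ ^ ((1 : ℝ) / d) :=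
  polynomial_kernel_distance_ball_general p d hd x x' δ hδ h2
end

section
/- For all x, x' ∈ ℝᵖ, (√(1 + ‖x‖₂²) − √(1 + ‖x'‖₂²))² ≤ 2·‖x − x'‖₂²·(‖x‖₂² + ‖x'‖₂²)/(2 + ‖x‖₂² + ‖x'‖₂²). -/
/-! Rationalising, `(√(1 + u) - √(1 + v))² = (u - v)² / (√(1 + u) + √(1 + v))²`, and the
denominator is at least `2 + u + v`. With `u = ‖x‖²`, `v = ‖x'‖²` it remains to bound
`(‖x‖² - ‖x'‖²)² = (‖x‖ - ‖x'‖)² (‖x‖ + ‖x'‖)² ≤ 2 ‖x - x'‖² (‖x‖² + ‖x'‖²)`. -/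

open Real

lemma two_add_add_le_sq_sqrt_one_add_add_sqrt_one_add {u v : ℝ} (hu : 0 ≤ u) (hv : 0 ≤ v) :
    2 + u + v ≤ (√(1 + u) + √(1 + v)) ^ 2 := by
  rw [add_sq, sq_sqrt (by linarith), sq_sqrt (by linarith)]
  nlinarith [mul_nonneg (sqrt_nonneg (1 + u)) (sqrt_nonneg (1 + v))]

lemma sq_sqrt_one_add_sub_sqrt_one_add_mul_le {u v : ℝ} (hu : 0 ≤ u) (hv : 0 ≤ v) :
    (√(1 + u) - √(1 + v)) ^ 2 * (2 + u + v) ≤ (u - v) ^ 2 :=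
  calc (√(1 + u) - √(1 + v)) ^ 2 * (2 + u + v)
      ≤ (√(1 + u) - √(1 + v)) ^ 2 * (√(1 + u) + √(1 + v)) ^ 2 := by
        gcongr; exact two_add_add_le_sq_sqrt_one_add_add_sqrt_one_add hu hv
    _ = (√(1 + u) ^ 2 - √(1 + v) ^ 2) ^ 2 := by ring
    _ = (u - v) ^ 2 := by rw [sq_sqrt (by linarith), sq_sqrt (by linarith)]; ring

lemma sq_sub_sq_sq_le (a b : ℝ) : (a ^ 2 - b ^ 2) ^ 2 ≤ 2 * (a - b) ^ 2 * (a ^ 2 + b ^ 2) :=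
  calc (a ^ 2 - b ^ 2) ^ 2 = (a - b) ^ 2 * (a + b) ^ 2 := by ring
    _ ≤ (a - b) ^ 2 * (2 * (a ^ 2 + b ^ 2)) := by gcongr; exact add_sq_le
    _ = 2 * (a - b) ^ 2 * (a ^ 2 + b ^ 2) := by ring

lemma sq_norm_sub_norm_le {E : Type*} [SeminormedAddCommGroup E] (x y : E) :
    (‖x‖ - ‖y‖) ^ 2 ≤ ‖x - y‖ ^ 2 :=
  sq_le_sq.mpr <| by simpa only [abs_norm] using abs_norm_sub_norm_le x y

/-- For all `x, x' ∈ ℝᵖ`,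
`(√(1 + ‖x‖₂²) - √(1 + ‖x'‖₂²))² ≤ 2‖x - x'‖₂²(‖x‖₂² + ‖x'‖₂²)/(2 + ‖x‖₂² + ‖x'‖₂²)`. -/
theorem sqrt_one_add_sq_diff_bound (p : ℕ) (x x' : EuclideanSpace ℝ (Fin p)) :
    (Real.sqrt (1 + ‖x‖ ^ 2) - Real.sqrt (1 + ‖x'‖ ^ 2)) ^ 2 ≤
      2 * ‖x - x'‖ ^ 2 * (‖x‖ ^ 2 + ‖x'‖ ^ 2) / (2 + ‖x‖ ^ 2 + ‖x'‖ ^ 2) := by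
  rw [le_div_iff₀ (by positivity)]
  calc _ ≤ (‖x‖ ^ 2 - ‖x'‖ ^ 2) ^ 2 :=
        sq_sqrt_one_add_sub_sqrt_one_add_mul_le (by positivity) (by positivity)
    _ ≤ 2 * (‖x‖ - ‖x'‖) ^ 2 * (‖x‖ ^ 2 + ‖x'‖ ^ 2) := sq_sub_sq_sq_le _ _
    _ ≤ 2 * ‖x - x'‖ ^ 2 * (‖x‖ ^ 2 + ‖x'‖ ^ 2) := by
      gcongr 2 * ?_ * _; exact sq_norm_sub_norm_le x x'
end
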